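/- (Norm equivalence under the backstepping transformation.) Let c > 0 and let u, w, k, l : [0,1] → ℝ be continuous functions such that w(x) = u(x) − ∫₀ˣ k(x−y) u(y) dy and u(x) = w(x) + ∫₀ˣ l(x−y) w(y) dy for all x ∈ [0,1]. Define V = ∫₀¹ e^{cx} w(x)² dx. Then (1 + ‖l‖_∞)^{−2} ‖u‖² ≤ V ≤ e^c (1 + ‖k‖_∞)² ‖u‖², where ‖u‖² = ∫₀¹ u(x)² dx is the squared L²(0,1) norm. -/

import Mathlib

open MeasureTheory

/-- supremum norm on C⁰[0,1] -/
noncomputable def supNorm (f : ℝ → ℝ) : ℝ := sSup ((fun x => |f x|) '' Set.Icc 0 1)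

lemma le_supNorm (f : ℝ → ℝ) (hf : ContinuousOn f (Set.Icc 0 1)) :
    ∀ x ∈ Set.Icc (0:ℝ) 1, |f x| ≤ supNorm f := by
  intro x hx
  have hcomp : IsCompact ((fun x => |f x|) '' Set.Icc (0:ℝ) 1) :=
    isCompact_Icc.image_of_continuousOn hf.abs
  exact le_csSup hcomp.bddAbove ⟨x, hx, rfl⟩

lemma supNorm_nonneg (f : ℝ → ℝ) (hf : ContinuousOn f (Set.Icc 0 1)) : 0 ≤ supNorm f :=
  le_trans (abs_nonneg _) (le_supNorm f hf 0 (by norm_num))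

/-- Cauchy–Schwarz via AM–GM: (∫₀¹|a|)² ≤ ∫₀¹ a². -/
lemma sq_int_abs_le (a : ℝ → ℝ) (ha : ContinuousOn a (Set.Icc 0 1)) :
    (∫ y in (0:ℝ)..1, |a y|) ^ 2 ≤ ∫ y in (0:ℝ)..1, a y ^ 2 := by
  set I := ∫ y in (0:ℝ)..1, |a y| with hI
  set S := ∫ y in (0:ℝ)..1, a y ^ 2 with hS
  have habs : IntervalIntegrable (fun y => |a y|) volume 0 1 :=
    (ha.abs.mono (by rw [Set.uIcc_of_le (by norm_num : (0:ℝ) ≤ 1)])).intervalIntegrable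
  have hsq : IntervalIntegrable (fun y => a y ^ 2) volume 0 1 :=
    ((ha.pow 2).mono (by rw [Set.uIcc_of_le (by norm_num : (0:ℝ) ≤ 1)])).intervalIntegrable
  have key : ∫ x in (0:ℝ)..1, 2 * (|a x| * I) ≤ ∫ x in (0:ℝ)..1, (a x ^ 2 + I ^ 2) := by
    apply intervalIntegral.integral_mono_on (by norm_num)
    · exact (habs.mul_const I).const_mul 2
    · exact hsq.add intervalIntegrable_const
    · intro x _
      calc 2 * (|a x| * I) = 2 * |a x| * I := by ring
        _ ≤ |a x| ^ 2 + I ^ 2 := two_mul_le_add_sq _ _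
        _ = a x ^ 2 + I ^ 2 := by rw [sq_abs]
  have h1 : ∫ x in (0:ℝ)..1, 2 * (|a x| * I) = 2 * I ^ 2 := by
    rw [intervalIntegral.integral_const_mul]
    rw [intervalIntegral.integral_mul_const]
    ring
  have h2 : ∫ x in (0:ℝ)..1, (a x ^ 2 + I ^ 2) = S + I ^ 2 := by
    rw [intervalIntegral.integral_add hsq intervalIntegrable_const]
    simp [hS]
  rw [h1, h2] at key
  linarith

/-- Pointwise bound for the Volterra transform. -/
lemma conv_pointwise (a m : ℝ → ℝ) (ha : ContinuousOn a (Set.Icc 0 1))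
    (hm : ContinuousOn m (Set.Icc 0 1)) (M : ℝ)
    (hM : ∀ t ∈ Set.Icc (0:ℝ) 1, |m t| ≤ M) (x : ℝ) (hx : x ∈ Set.Icc (0:ℝ) 1) :
    |a x + ∫ y in (0:ℝ)..x, m (x - y) * a y| ≤
      |a x| + M * ∫ y in (0:ℝ)..1, |a y| := by
  obtain ⟨hx0, hx1⟩ := hx
  have hMnn : 0 ≤ M := le_trans (abs_nonneg _) (hM 0 (by norm_num))
  have hsub : Set.Icc (0:ℝ) x ⊆ Set.Icc 0 1 := Set.Icc_subset_Icc le_rfl hx1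
  have hmaps : ∀ y ∈ Set.Icc (0:ℝ) x, x - y ∈ Set.Icc (0:ℝ) 1 := by
    intro y hy
    exact ⟨by linarith [hy.2], by linarith [hy.1]⟩
  have hcont : ContinuousOn (fun y => m (x - y) * a y) (Set.Icc 0 x) :=
    (hm.comp ((continuous_const.sub continuous_id).continuousOn) hmaps).mul (ha.mono hsub)
  have hint : IntervalIntegrable (fun y => m (x - y) * a y) volume 0 x :=
    (hcont.mono (by rw [Set.uIcc_of_le hx0])).intervalIntegrable
  have hintabs : IntervalIntegrable (fun y => |m (x - y) * a y|) volume 0 x :=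
    (hcont.abs.mono (by rw [Set.uIcc_of_le hx0])).intervalIntegrable
  have habs1 : ContinuousOn (fun y => |a y|) (Set.Icc (0:ℝ) 1) := ha.abs
  have hintabsa : IntervalIntegrable (fun y => M * |a y|) volume 0 x :=
    ((continuousOn_const.mul (habs1.mono hsub)).mono (by rw [Set.uIcc_of_le hx0])).intervalIntegrable
  have hintabsa1 : IntervalIntegrable (fun y => |a y|) volume 0 1 :=
    (habs1.mono (by rw [Set.uIcc_of_le (by norm_num : (0:ℝ) ≤ 1)])).intervalIntegrable
  have step1 : |∫ y in (0:ℝ)..x, m (x - y) * a y| ≤ ∫ y in (0:ℝ)..x, |m (x - y) * a y| :=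
    intervalIntegral.abs_integral_le_integral_abs hx0
  have step2 : ∫ y in (0:ℝ)..x, |m (x - y) * a y| ≤ ∫ y in (0:ℝ)..x, M * |a y| := by
    apply intervalIntegral.integral_mono_on hx0 hintabs hintabsa
    intro y hy
    rw [abs_mul]
    exact mul_le_mul_of_nonneg_right (hM _ (hmaps y hy)) (abs_nonneg _)
  have step3 : ∫ y in (0:ℝ)..x, M * |a y| = M * ∫ y in (0:ℝ)..x, |a y| :=
    intervalIntegral.integral_const_mul _ _
  have step4 : ∫ y in (0:ℝ)..x, |a y| ≤ ∫ y in (0:ℝ)..1, |a y| := by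
    apply intervalIntegral.integral_mono_interval le_rfl hx0 hx1
    · exact Filter.Eventually.of_forall fun y => abs_nonneg _
    · exact hintabsa1
  calc |a x + ∫ y in (0:ℝ)..x, m (x - y) * a y|
      ≤ |a x| + |∫ y in (0:ℝ)..x, m (x - y) * a y| := abs_add_le _ _
    _ ≤ |a x| + M * ∫ y in (0:ℝ)..1, |a y| := by
        have := step1.trans (step2.trans_eq step3)
        nlinarith [mul_le_mul_of_nonneg_left step4 hMnn]

/-- L² bound from the pointwise bound. -/
lemma L2_bound (a v : ℝ → ℝ) (ha : ContinuousOn a (Set.Icc 0 1))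
    (hv : ContinuousOn v (Set.Icc 0 1)) (M : ℝ) (hMnn : 0 ≤ M)
    (hbound : ∀ x ∈ Set.Icc (0:ℝ) 1, |v x| ≤ |a x| + M * ∫ y in (0:ℝ)..1, |a y|) :
    ∫ x in (0:ℝ)..1, v x ^ 2 ≤ (1 + M) ^ 2 * ∫ x in (0:ℝ)..1, a x ^ 2 := by
  set I := ∫ y in (0:ℝ)..1, |a y| with hIdef
  set S := ∫ x in (0:ℝ)..1, a x ^ 2 with hSdef
  have hInn : 0 ≤ I := intervalIntegral.integral_nonneg (by norm_num) fun y _ => abs_nonneg _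
  have hI2 : I ^ 2 ≤ S := sq_int_abs_le a ha
  have huIcc : Set.uIcc (0:ℝ) 1 = Set.Icc 0 1 := Set.uIcc_of_le (by norm_num)
  have hvsq : IntervalIntegrable (fun x => v x ^ 2) volume 0 1 :=
    ((hv.pow 2).mono huIcc.le).intervalIntegrable
  have habs : IntervalIntegrable (fun y => |a y|) volume 0 1 :=
    (ha.abs.mono huIcc.le).intervalIntegrable
  have hasq : IntervalIntegrable (fun x => a x ^ 2) volume 0 1 :=
    ((ha.pow 2).mono huIcc.le).intervalIntegrable
  have hrhs : IntervalIntegrable (fun x => a x ^ 2 + (2 * M * I * |a x| + (M * I) ^ 2))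
      volume 0 1 := hasq.add ((habs.const_mul _).add intervalIntegrable_const)
  have key : ∫ x in (0:ℝ)..1, v x ^ 2 ≤
      ∫ x in (0:ℝ)..1, (a x ^ 2 + (2 * M * I * |a x| + (M * I) ^ 2)) := by
    apply intervalIntegral.integral_mono_on (by norm_num) hvsq hrhs
    intro x hx
    have h1 := hbound x hx
    have h2 : v x ^ 2 ≤ (|a x| + M * I) ^ 2 := by
      rw [← sq_abs (v x)]
      apply pow_le_pow_left₀ (abs_nonneg _) h1
    nlinarith [abs_nonneg (a x), sq_abs (a x)]
  have hexp : ∫ x in (0:ℝ)..1, (a x ^ 2 + (2 * M * I * |a x| + (M * I) ^ 2)) =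
      S + (2 * M * I * I + (M * I) ^ 2) := by
    rw [intervalIntegral.integral_add hasq ((habs.const_mul _).add intervalIntegrable_const),
      intervalIntegral.integral_add (habs.const_mul _) intervalIntegrable_const,
      intervalIntegral.integral_const_mul]
    simp [hSdef, hIdef]
  rw [hexp] at key
  nlinarith [mul_le_mul_of_nonneg_left hI2 hMnn, mul_le_mul_of_nonneg_left hI2 (mul_nonneg hMnn hMnn)]

/-- norm equivalence under the backstepping transformation:
(1 + ‖l‖_∞)⁻² ‖u‖² ≤ V ≤ e^c (1 + ‖k‖_∞)² ‖u‖²,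
where V = ∫₀¹ e^{cx} w(x)² dx and ‖u‖² = ∫₀¹ u(x)² dx. -/
theorem norm_equivalence (c : ℝ) (hc : 0 < c) (u w k l : ℝ → ℝ)
    (hu : ContinuousOn u (Set.Icc 0 1))
    (hw : ContinuousOn w (Set.Icc 0 1))
    (hk : ContinuousOn k (Set.Icc 0 1))
    (hl : ContinuousOn l (Set.Icc 0 1))
    (hdirect : ∀ x ∈ Set.Icc (0:ℝ) 1,
      w x = u x - ∫ y in (0:ℝ)..x, k (x - y) * u y)
    (hinverse : ∀ x ∈ Set.Icc (0:ℝ) 1,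
      u x = w x + ∫ y in (0:ℝ)..x, l (x - y) * w y) :
    (∫ x in (0:ℝ)..1, u x ^ 2) / (1 + supNorm l) ^ 2 ≤
        (∫ x in (0:ℝ)..1, Real.exp (c * x) * w x ^ 2) ∧
      (∫ x in (0:ℝ)..1, Real.exp (c * x) * w x ^ 2) ≤
        Real.exp c * (1 + supNorm k) ^ 2 * ∫ x in (0:ℝ)..1, u x ^ 2 := by
  have huIcc : Set.uIcc (0:ℝ) 1 = Set.Icc 0 1 := Set.uIcc_of_le (by norm_num)
  have hKnn : 0 ≤ supNorm k := supNorm_nonneg k hk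
  have hLnn : 0 ≤ supNorm l := supNorm_nonneg l hl
  -- pointwise bound for w in terms of u
  have hwb : ∀ x ∈ Set.Icc (0:ℝ) 1,
      |w x| ≤ |u x| + supNorm k * ∫ y in (0:ℝ)..1, |u y| := by
    intro x hx
    have hkey := conv_pointwise u (fun t => -(k t)) hu hk.neg (supNorm k)
      (fun t ht => by rw [abs_neg]; exact le_supNorm k hk t ht) x hx
    have heq : w x = u x + ∫ y in (0:ℝ)..x, (fun t => -(k t)) (x - y) * u y := by
      rw [hdirect x hx, sub_eq_add_neg, ← intervalIntegral.integral_neg]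
      simp [neg_mul]
    rw [heq]
    exact hkey
  have hub : ∀ x ∈ Set.Icc (0:ℝ) 1,
      |u x| ≤ |w x| + supNorm l * ∫ y in (0:ℝ)..1, |w y| := by
    intro x hx
    have hkey := conv_pointwise w l hw hl (supNorm l) (le_supNorm l hl) x hx
    rw [hinverse x hx]
    exact hkey
  have hW : ∫ x in (0:ℝ)..1, w x ^ 2 ≤ (1 + supNorm k) ^ 2 * ∫ x in (0:ℝ)..1, u x ^ 2 :=
    L2_bound u w hu hw _ hKnn hwb
  have hU : ∫ x in (0:ℝ)..1, u x ^ 2 ≤ (1 + supNorm l) ^ 2 * ∫ x in (0:ℝ)..1, w x ^ 2 :=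
    L2_bound w u hw hu _ hLnn hub
  have hwsq : IntervalIntegrable (fun x => w x ^ 2) volume 0 1 :=
    ((hw.pow 2).mono huIcc.le).intervalIntegrable
  have hews : ContinuousOn (fun x => Real.exp (c * x) * w x ^ 2) (Set.Icc 0 1) :=
    ((Real.continuous_exp.comp (continuous_const.mul continuous_id)).continuousOn).mul (hw.pow 2)
  have hewsint : IntervalIntegrable (fun x => Real.exp (c * x) * w x ^ 2) volume 0 1 :=
    (hews.mono huIcc.le).intervalIntegrable
  -- V ≤ e^c ∫ w²
  have hVub : (∫ x in (0:ℝ)..1, Real.exp (c * x) * w x ^ 2) ≤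
      Real.exp c * ∫ x in (0:ℝ)..1, w x ^ 2 := by
    rw [← intervalIntegral.integral_const_mul]
    apply intervalIntegral.integral_mono_on (by norm_num) hewsint
      (hwsq.const_mul _)
    intro x hx
    have : Real.exp (c * x) ≤ Real.exp c := by
      apply Real.exp_le_exp.2
      nlinarith [hx.2, hc.le]
    exact mul_le_mul_of_nonneg_right this (sq_nonneg _)
  -- ∫ w² ≤ V
  have hVlb : (∫ x in (0:ℝ)..1, w x ^ 2) ≤
      ∫ x in (0:ℝ)..1, Real.exp (c * x) * w x ^ 2 := by
    apply intervalIntegral.integral_mono_on (by norm_num) hwsq hewsint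
    intro x hx
    have h1 : (1:ℝ) ≤ Real.exp (c * x) := by
      rw [← Real.exp_zero]
      apply Real.exp_le_exp.2
      nlinarith [hx.1, hc.le]
    nlinarith [sq_nonneg (w x)]
  constructor
  · rw [div_le_iff₀ (by positivity)]
    calc (∫ x in (0:ℝ)..1, u x ^ 2)
        ≤ (1 + supNorm l) ^ 2 * ∫ x in (0:ℝ)..1, w x ^ 2 := hU
      _ ≤ (1 + supNorm l) ^ 2 * ∫ x in (0:ℝ)..1, Real.exp (c * x) * w x ^ 2 := by
          exact mul_le_mul_of_nonneg_left hVlb (by positivity)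
      _ = (∫ x in (0:ℝ)..1, Real.exp (c * x) * w x ^ 2) * (1 + supNorm l) ^ 2 := by ring
  · calc (∫ x in (0:ℝ)..1, Real.exp (c * x) * w x ^ 2)
        ≤ Real.exp c * ∫ x in (0:ℝ)..1, w x ^ 2 := hVub
      _ ≤ Real.exp c * ((1 + supNorm k) ^ 2 * ∫ x in (0:ℝ)..1, u x ^ 2) :=
          mul_le_mul_of_nonneg_left hW (Real.exp_pos c).le
      _ = Real.exp c * (1 + supNorm k) ^ 2 * ∫ x in (0:ℝ)..1, u x ^ 2 := by ring
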